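/- Let (X1^i)_{i≥0} and (X2^i)_{i≥0} be two families of nonnegative real random variables, all mutually independent, with the X1^i identically distributed and the X2^i identically distributed. Let R > 0, d > 0, t ≥ d, n̂ = ⌈R(t-d)⌉, and define D1(n) = max_{0 ≤ v ≤ n} ( (n-v)/R + Σ_{i=0}^{v} X1^{n-i} ) and D2(n) = max_{0 ≤ v ≤ n} ( D1(n-v) + Σ_{i=0}^{v} X2^{n-i} ). Suppose s > 0 is such that M1(s) = E[e^{s X1^0}] and M2(s) = E[e^{s X2^0}] are finite and max(M1(s), M2(s)) < e^{s/R}, and set βk(s) = Mk(s) e^{-s/R} for k = 1, 2. Then P( D2(n̂) > t ) ≤ e^{-s(d - 1/R)} · M1(s) M2(s) / ( (1 - β1(s)) (1 - β2(s)) ). -/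

import Mathlib

open MeasureTheory ProbabilityTheory Finset Real

/-!
Unrolling Reich's equation at both hops, `D₂(n) > t` forces, for some `v₀ + v₁ ≤ n`,
`(n - v₀ - v₁)/R + ∑_{i ≤ v₁} X₁^{n-v₀-i} + ∑_{i ≤ v₀} X₂^{n-i} > t`. Each of these events has
probability at most `e^{-s(t - n/R)} M₁ M₂ β₁^{v₁} β₂^{v₀}` by the Chernoff bound for a sum of
independent variables, and the union bound over `(v₀, v₁)` is dominated by the product of two
geometric series. Finally, for `n = ⌈R(t - d)⌉`, `n/R ≤ t - d + 1/R` turns `e^{-s(t - n/R)}` into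
`e^{-s(d - 1/R)}`.
-/

/-- Reich's (max-plus) equation: departure time of packet `n` from an FCFS queue with
arrival process `A` and service times `X`. -/
noncomputable def depart {Ω : Type*} (A : ℕ → Ω → ℝ) (X : ℕ → Ω → ℝ) (n : ℕ) (ω : Ω) : ℝ :=
  (Finset.range (n + 1)).sup' ⟨0, Finset.mem_range.mpr (Nat.succ_pos n)⟩
    (fun v => A (n - v) ω + ∑ i ∈ Finset.range (v + 1), X (n - i) ω)

lemma lt_depart_iff {Ω : Type*} {A X : ℕ → Ω → ℝ} {n : ℕ} {ω : Ω} {t : ℝ} :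
    t < depart A X n ω ↔
      ∃ v ∈ range (n + 1), t < A (n - v) ω + ∑ i ∈ range (v + 1), X (n - i) ω :=
  lt_sup'_iff _

lemma setOf_lt_depart_depart_subset {Ω : Type*} (A X₁ X₂ : ℕ → Ω → ℝ) (n : ℕ) (t : ℝ) :
    {ω | t < depart (depart A X₁) X₂ n ω} ⊆
      ⋃ v₀ ∈ range (n + 1), ⋃ v₁ ∈ range (n - v₀ + 1),
        {ω | t < A (n - v₀ - v₁) ω + (∑ i ∈ range (v₁ + 1), X₁ (n - v₀ - i) ω +
          ∑ i ∈ range (v₀ + 1), X₂ (n - i) ω)} := by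
  intro ω hω
  obtain ⟨v₀, hv₀, hω⟩ := lt_depart_iff.mp hω
  obtain ⟨v₁, hv₁, hω⟩ := lt_depart_iff.mp (sub_lt_iff_lt_add.mpr hω)
  simp only [Set.mem_iUnion]
  exact ⟨v₀, hv₀, v₁, hv₁, show t < _ by linarith⟩

lemma geom_sum_range_le_inv {x : ℝ} (hx₀ : 0 ≤ x) (hx₁ : x < 1) (n : ℕ) :
    ∑ i ∈ range n, x ^ i ≤ (1 - x)⁻¹ := by
  have h := geom_sum_Ico_le_of_lt_one (m := 0) (n := n) hx₀ hx₁
  rwa [← range_eq_Ico, pow_zero, one_div] at h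

lemma sum_range_sum_range_pow_mul_pow_le {a b : ℝ} (ha₀ : 0 ≤ a) (ha₁ : a < 1)
    (hb₀ : 0 ≤ b) (hb₁ : b < 1) (N : ℕ) (m : ℕ → ℕ) :
    ∑ i ∈ range N, ∑ j ∈ range (m i), a ^ j * b ^ i ≤ ((1 - a) * (1 - b))⁻¹ := by
  have ha : 0 ≤ (1 - a)⁻¹ := inv_nonneg.mpr (by linarith)
  calc ∑ i ∈ range N, ∑ j ∈ range (m i), a ^ j * b ^ i
      = ∑ i ∈ range N, (∑ j ∈ range (m i), a ^ j) * b ^ i := by simp only [sum_mul]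
    _ ≤ ∑ i ∈ range N, (1 - a)⁻¹ * b ^ i := by
        gcongr with i
        exact geom_sum_range_le_inv ha₀ ha₁ _
    _ ≤ (1 - a)⁻¹ * (1 - b)⁻¹ := by
        rw [← mul_sum]
        exact mul_le_mul_of_nonneg_left (geom_sum_range_le_inv hb₀ hb₁ N) ha
    _ = ((1 - a) * (1 - b))⁻¹ := (mul_inv _ _).symm

lemma natCeil_mul_div_le {R x : ℝ} (hR : 0 < R) (hx : 0 ≤ x) :
    (⌈R * x⌉₊ : ℝ) / R ≤ x + 1 / R := by
  rw [div_le_iff₀ hR, add_mul, one_div_mul_cancel hR.ne', mul_comm x]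
  exact (Nat.ceil_lt_add_one (mul_nonneg hR.le hx)).le

lemma injOn_sub_range {m v : ℕ} (h : v ≤ m) : Set.InjOn (m - ·) (range (v + 1) : Set ℕ) := by
  intro i hi j hj hij
  simp only [coe_range, Set.mem_Iio] at hi hj
  simp only at hij
  omega

namespace ProbabilityTheory

variable {Ω : Type*} [MeasurableSpace Ω] {μ : Measure Ω} [IsFiniteMeasure μ] {s : ℝ}

lemma iIndepFun.measureReal_sum_ge_le_exp_mul_prod_mgf {ι : Type*} {Y : ι → Ω → ℝ}
    (hY : iIndepFun Y μ) (hmeas : ∀ i, Measurable (Y i)) {S : Finset ι} (hs : 0 ≤ s)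
    (hint : ∀ i ∈ S, Integrable (fun ω => exp (s * Y i ω)) μ) (a : ℝ) :
    μ.real {ω | a ≤ ∑ i ∈ S, Y i ω} ≤ exp (-s * a) * ∏ i ∈ S, mgf (Y i) μ s := by
  have h := measure_ge_le_exp_mul_mgf a hs (hY.integrable_exp_mul_sum hmeas hint)
  simpa only [Finset.sum_apply, hY.mgf_sum hmeas] using h

lemma iIndepFun.measureReal_sum_add_sum_ge_le_exp_mul_mgf_pow {ι κ : Type*} {X₁ : ι → Ω → ℝ}
    {X₂ : κ → Ω → ℝ} {Y₁ Y₂ : Ω → ℝ} (hindep : iIndepFun (Sum.elim X₁ X₂) μ)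
    (hmeas₁ : ∀ i, Measurable (X₁ i)) (hmeas₂ : ∀ i, Measurable (X₂ i))
    (hid₁ : ∀ i, IdentDistrib (X₁ i) Y₁ μ μ) (hid₂ : ∀ i, IdentDistrib (X₂ i) Y₂ μ μ)
    (hs : 0 ≤ s) (hint₁ : Integrable (fun ω => exp (s * Y₁ ω)) μ)
    (hint₂ : Integrable (fun ω => exp (s * Y₂ ω)) μ) (A : Finset ι) (B : Finset κ) (a : ℝ) :
    μ.real {ω | a ≤ ∑ i ∈ A, X₁ i ω + ∑ i ∈ B, X₂ i ω} ≤
      exp (-s * a) * (mgf Y₁ μ s ^ #A * mgf Y₂ μ s ^ #B) := by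
  have hexp : Measurable fun x : ℝ => exp (s * x) := (measurable_const_mul s).exp
  have h := hindep.measureReal_sum_ge_le_exp_mul_prod_mgf (S := A.disjSum B)
    (by rintro (i | i); exacts [hmeas₁ i, hmeas₂ i]) hs
    (by
      rintro (i | i) -
      exacts [((hid₁ i).comp hexp).integrable_iff.mpr hint₁,
        ((hid₂ i).comp hexp).integrable_iff.mpr hint₂]) a
  simp only [sum_disjSum, prod_disjSum, Sum.elim_inl, Sum.elim_inr] at h
  rwa [prod_congr rfl fun i _ => mgf_congr_of_identDistrib _ _ (hid₁ i) s,
    prod_congr rfl fun i _ => mgf_congr_of_identDistrib _ _ (hid₂ i) s,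
    prod_const, prod_const] at h

end ProbabilityTheory

lemma measureReal_lt_depart_depart_le {Ω : Type*} [MeasurableSpace Ω] (μ : Measure Ω)
    [IsFiniteMeasure μ] (A X₁ X₂ : ℕ → Ω → ℝ) (n : ℕ) (t : ℝ) :
    μ.real {ω | t < depart (depart A X₁) X₂ n ω} ≤
      ∑ v₀ ∈ range (n + 1), ∑ v₁ ∈ range (n - v₀ + 1),
        μ.real {ω | t < A (n - v₀ - v₁) ω + (∑ i ∈ range (v₁ + 1), X₁ (n - v₀ - i) ω +
          ∑ i ∈ range (v₀ + 1), X₂ (n - i) ω)} :=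
  (measureReal_mono (setOf_lt_depart_depart_subset A X₁ X₂ n t) (measure_ne_top _ _)).trans <|
    (measureReal_biUnion_finset_le _ _).trans <|
      sum_le_sum fun _ _ => measureReal_biUnion_finset_le _ _

lemma measureReal_lt_periodic_path_le {Ω : Type*} [MeasurableSpace Ω] {μ : Measure Ω}
    [IsFiniteMeasure μ] {X₁ X₂ : ℕ → Ω → ℝ} {Y₁ Y₂ : Ω → ℝ}
    (hindep : iIndepFun (Sum.elim X₁ X₂) μ)
    (hmeas₁ : ∀ i, Measurable (X₁ i)) (hmeas₂ : ∀ i, Measurable (X₂ i))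
    (hid₁ : ∀ i, IdentDistrib (X₁ i) Y₁ μ μ) (hid₂ : ∀ i, IdentDistrib (X₂ i) Y₂ μ μ)
    {s : ℝ} (hs : 0 ≤ s) (hint₁ : Integrable (fun ω => exp (s * Y₁ ω)) μ)
    (hint₂ : Integrable (fun ω => exp (s * Y₂ ω)) μ) (R t : ℝ) {n v₀ v₁ : ℕ}
    (hv : v₀ + v₁ ≤ n) :
    μ.real {ω | t < ((n - v₀ - v₁ : ℕ) : ℝ) / R + (∑ i ∈ range (v₁ + 1), X₁ (n - v₀ - i) ω +
        ∑ i ∈ range (v₀ + 1), X₂ (n - i) ω)} ≤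
      exp (-s * (t - n / R)) * mgf Y₁ μ s * mgf Y₂ μ s *
        ((mgf Y₁ μ s * exp (-(s / R))) ^ v₁ * (mgf Y₂ μ s * exp (-(s / R))) ^ v₀) := by
  have hinj₁ := injOn_sub_range (m := n - v₀) (v := v₁) (by omega)
  have hinj₂ := injOn_sub_range (m := n) (v := v₀) (by omega)
  have h := hindep.measureReal_sum_add_sum_ge_le_exp_mul_mgf_pow hmeas₁ hmeas₂ hid₁ hid₂ hs
    hint₁ hint₂ ((range (v₁ + 1)).image (n - v₀ - ·)) ((range (v₀ + 1)).image (n - ·))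
    (t - ((n - v₀ - v₁ : ℕ) : ℝ) / R)
  simp only [sum_image hinj₁, sum_image hinj₂, card_image_of_injOn hinj₁,
    card_image_of_injOn hinj₂, card_range] at h
  have hexp : exp (-s * (t - ((n - v₀ - v₁ : ℕ) : ℝ) / R)) =
      exp (-s * (t - n / R)) * exp (-(s / R)) ^ v₁ * exp (-(s / R)) ^ v₀ := by
    rw [← exp_nat_mul, ← exp_nat_mul, ← exp_add, ← exp_add, Nat.cast_sub (by omega),
      Nat.cast_sub (by omega)]
    congr 1
    ring
  refine (measureReal_mono (Set.ofPred_subset_ofPred.mpr fun ω hω => ?_)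
    (measure_ne_top _ _)).trans (h.trans_eq ?_)
  · linarith
  · rw [hexp]
    ring

theorem stmt13_general {Ω : Type*} [MeasurableSpace Ω] (μ : Measure Ω) [IsProbabilityMeasure μ]
    (X1 X2 : ℕ → Ω → ℝ)
    (hmeas1 : ∀ i, Measurable (X1 i)) (hmeas2 : ∀ i, Measurable (X2 i))
    (hindep : iIndepFun (Sum.elim X1 X2 : ℕ ⊕ ℕ → Ω → ℝ) μ)
    (hident1 : ∀ i, μ.map (X1 i) = μ.map (X1 0))
    (hident2 : ∀ i, μ.map (X2 i) = μ.map (X2 0))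
    (R d t s : ℝ) (hR : 0 < R) (ht : d ≤ t) (hs : 0 < s)
    (hint1 : Integrable (fun ω => Real.exp (s * X1 0 ω)) μ)
    (hint2 : Integrable (fun ω => Real.exp (s * X2 0 ω)) μ)
    (hlt : max (∫ ω, Real.exp (s * X1 0 ω) ∂μ) (∫ ω, Real.exp (s * X2 0 ω) ∂μ) <
      Real.exp (s / R)) :
    μ {ω | t < depart (depart (fun n _ => (n : ℝ) / R) X1) X2 ⌈R * (t - d)⌉₊ ω} ≤
      ENNReal.ofReal (Real.exp (-s * (d - 1 / R)) *
        (∫ ω, Real.exp (s * X1 0 ω) ∂μ) * (∫ ω, Real.exp (s * X2 0 ω) ∂μ) /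
        ((1 - (∫ ω, Real.exp (s * X1 0 ω) ∂μ) * Real.exp (-(s / R))) *
         (1 - (∫ ω, Real.exp (s * X2 0 ω) ∂μ) * Real.exp (-(s / R))))) := by
  have hid₁ i : IdentDistrib (X1 i) (X1 0) μ μ :=
    ⟨(hmeas1 i).aemeasurable, (hmeas1 0).aemeasurable, hident1 i⟩
  have hid₂ i : IdentDistrib (X2 i) (X2 0) μ μ :=
    ⟨(hmeas2 i).aemeasurable, (hmeas2 0).aemeasurable, hident2 i⟩
  change μ _ ≤ ENNReal.ofReal (exp _ * mgf (X1 0) μ s * mgf (X2 0) μ s /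
    ((1 - mgf (X1 0) μ s * _) * (1 - mgf (X2 0) μ s * _)))
  change max (mgf (X1 0) μ s) (mgf (X2 0) μ s) < _ at hlt
  set n := ⌈R * (t - d)⌉₊
  set M₁ := mgf (X1 0) μ s
  set M₂ := mgf (X2 0) μ s
  have hβ {M : ℝ} (hM₀ : 0 ≤ M) (hM : M < exp (s / R)) :
      0 ≤ M * exp (-(s / R)) ∧ M * exp (-(s / R)) < 1 := by
    rw [exp_neg, ← div_eq_mul_inv, div_lt_one (exp_pos _)]
    exact ⟨by positivity, hM⟩
  have hM₁ : 0 ≤ M₁ := mgf_nonneg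
  have hM₂ : 0 ≤ M₂ := mgf_nonneg
  obtain ⟨hβ₁₀, hβ₁⟩ := hβ hM₁ ((le_max_left _ _).trans_lt hlt)
  obtain ⟨hβ₂₀, hβ₂⟩ := hβ hM₂ ((le_max_right _ _).trans_lt hlt)
  have hn := natCeil_mul_div_le hR (sub_nonneg.mpr ht)
  rw [← ofReal_measureReal, div_eq_mul_inv]
  refine ENNReal.ofReal_le_ofReal ?_
  calc _ ≤ _ := measureReal_lt_depart_depart_le μ _ X1 X2 n t
    _ ≤ ∑ v₀ ∈ range (n + 1), ∑ v₁ ∈ range (n - v₀ + 1), exp (-s * (t - n / R)) * M₁ * M₂ *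
          ((M₁ * exp (-(s / R))) ^ v₁ * (M₂ * exp (-(s / R))) ^ v₀) :=
        sum_le_sum fun v₀ hv₀ => sum_le_sum fun v₁ hv₁ =>
          measureReal_lt_periodic_path_le hindep hmeas1 hmeas2 hid₁ hid₂ hs.le hint1 hint2 R t
            (by simp only [mem_range] at hv₀ hv₁; omega)
    _ ≤ exp (-s * (t - n / R)) * M₁ * M₂ *
          ((1 - M₁ * exp (-(s / R))) * (1 - M₂ * exp (-(s / R))))⁻¹ := by
        simp only [← mul_sum]
        gcongr
        exact sum_range_sum_range_pow_mul_pow_le hβ₁₀ hβ₁ hβ₂₀ hβ₂ _ _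
    _ ≤ _ := by
        have : 0 ≤ (1 - M₁ * exp (-(s / R))) * (1 - M₂ * exp (-(s / R))) :=
          mul_nonneg (by linarith) (by linarith)
        gcongr exp ?_ * _ * _ * _
        nlinarith

/-- Two-hop Chernoff upper bound: for the two-hop FCFS tandem with periodic arrivals, if
`max (M1(s), M2(s)) < e^{s/R}` then the violation probability of the system departure instant
of the tagged packet `n̂ = ⌈R(t-d)⌉` is at most
`Ψ₂(s,d,R) = e^{-s(d-1/R)} M1(s) M2(s) / ((1-β1(s))(1-β2(s)))`, `βk(s) = Mk(s) e^{-s/R}`. -/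
theorem stmt13 {Ω : Type*} [MeasurableSpace Ω] (μ : Measure Ω) [IsProbabilityMeasure μ]
    (X1 X2 : ℕ → Ω → ℝ)
    (hmeas1 : ∀ i, Measurable (X1 i)) (hmeas2 : ∀ i, Measurable (X2 i))
    (hnn1 : ∀ i ω, 0 ≤ X1 i ω) (hnn2 : ∀ i ω, 0 ≤ X2 i ω)
    (hindep : iIndepFun (Sum.elim X1 X2 : ℕ ⊕ ℕ → Ω → ℝ) μ)
    (hident1 : ∀ i, μ.map (X1 i) = μ.map (X1 0))
    (hident2 : ∀ i, μ.map (X2 i) = μ.map (X2 0))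
    (R d t s : ℝ) (hR : 0 < R) (hd : 0 < d) (ht : d ≤ t) (hs : 0 < s)
    (hint1 : Integrable (fun ω => Real.exp (s * X1 0 ω)) μ)
    (hint2 : Integrable (fun ω => Real.exp (s * X2 0 ω)) μ)
    (hlt : max (∫ ω, Real.exp (s * X1 0 ω) ∂μ) (∫ ω, Real.exp (s * X2 0 ω) ∂μ) <
      Real.exp (s / R)) :
    μ {ω | t < depart (depart (fun n _ => (n : ℝ) / R) X1) X2 ⌈R * (t - d)⌉₊ ω} ≤
      ENNReal.ofReal (Real.exp (-s * (d - 1 / R)) *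
        (∫ ω, Real.exp (s * X1 0 ω) ∂μ) * (∫ ω, Real.exp (s * X2 0 ω) ∂μ) /
        ((1 - (∫ ω, Real.exp (s * X1 0 ω) ∂μ) * Real.exp (-(s / R))) *
         (1 - (∫ ω, Real.exp (s * X2 0 ω) ∂μ) * Real.exp (-(s / R))))) :=
  stmt13_general μ X1 X2 hmeas1 hmeas2 hindep hident1 hident2 R d t s hR ht hs hint1 hint2 hlt
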